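/- For G = G(m,n,k) with trivial centre, S ⊆ ℤ_m a base, and x, y ∈ ℤ_m: μ(x,y) ∈ Σ_G(S) if and only if the whole container C(x,y) = {μ(x,yz) : z ∈ ℤ_m} is contained in Σ_G(S). -/

import Mathlib

/-- `n = ind_m(k)`: `n` is the least positive integer with `k^n ≡ 1 (mod m)`. -/
def IsIndex (m k n : ℕ) : Prop :=
  0 < n ∧ k ^ n ≡ 1 [MOD m] ∧ ∀ d : ℕ, 0 < d → k ^ d ≡ 1 [MOD m] → n ≤ d

/-- The mu-map `μ(x,y)` of `G = G(m,n,k)`, acting on elements of `G` written in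
the normal form `a^i b^j` (identified with pairs `(i,j) ∈ ℤ_m × ℤ_n`):
`(a^i b^j) μ(x,y) = a^N` with `N ≡ x·i·k^j − y·(k^j − 1) (mod m)`. -/
def Mu (m n k : ℕ) (x y : ZMod m) : Function.End (ZMod m × ZMod n) :=
  fun p => (x * p.1 * (k : ZMod m) ^ p.2.val -
    y * ((k : ZMod m) ^ p.2.val - 1), 0)

/-- The container `C(x,y) = {μ(x, yz) : z ∈ ℤ_m}`. -/
def Container (m n k : ℕ) (x y : ZMod m) :
    Set (Function.End (ZMod m × ZMod n)) :=
  {f | ∃ z : ZMod m, f = Mu m n k x (y * z)}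
/-- The multiplicative closure `S*` of `S` in `ℤ_m`. -/
def mulClosure (m : ℕ) (S : Set (ZMod m)) : Set (ZMod m) :=
  Subsemigroup.closure S

/-- `S ⊆ ℤ_m` is a base if it contains `0` and at least one unit of `ℤ_m`. -/
def IsBase (m : ℕ) (S : Set (ZMod m)) : Prop :=
  (0 : ZMod m) ∈ S ∧ ∃ u ∈ S, IsUnit u

/-- The set `Γ_μ(S) = {μ(s,z) : s ∈ S, z ∈ ℤ_m}` of mu-generators. -/
def GammaMu (m n k : ℕ) (S : Set (ZMod m)) :
    Set (Function.End (ZMod m × ZMod n)) :=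
  {f | ∃ s ∈ S, ∃ z : ZMod m, f = Mu m n k s z}

/-- The set `Π_μ(S) = {μ(s·s*, s*·z) : s ∈ S, s* ∈ S*, z ∈ ℤ_m}` of
mu-products. -/
def PiMu (m n k : ℕ) (S : Set (ZMod m)) :
    Set (Function.End (ZMod m × ZMod n)) :=
  {f | ∃ s ∈ S, ∃ t ∈ mulClosure m S, ∃ z : ZMod m,
    f = Mu m n k (s * t) (t * z)}

/-- The `G`-semigroup `Σ_G(S)`: the subsemigroup of `M(G)` (under composition)
generated by `Γ_μ(S)`. -/
def SigmaG (m n k : ℕ) (S : Set (ZMod m)) :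
    Set (Function.End (ZMod m × ZMod n)) :=
  Subsemigroup.closure (GammaMu m n k S)

/-! The mu-maps compose by `μ(a,b) ∘ μ(c,d) = μ(ac, ad)`, so replacing the second parameter `d`
of the right factor by `dz` replaces that of the product by `adz`. Hence, by induction over
products of generators, every element of `Σ_G(S)` is some `μ(a,b)` whose whole container lies in
`Σ_G(S)`. Since `gcd(m, k-1) = 1`, the pair `(a,b)` is determined by the map `μ(a,b)`
(evaluate at `a¹b⁰` and at `a⁰b¹`), which gives the forward direction; the converse holds because
`μ(x,y) = μ(x,y·1)` lies in its own container. -/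

theorem mu_mul_mu (m n k : ℕ) (a b c d : ZMod m) :
    Mu m n k a b * Mu m n k c d = Mu m n k (a * c) (a * d) := by
  funext p
  show Mu m n k a b (Mu m n k c d p) = _
  simp only [Mu, ZMod.val_zero, pow_zero, sub_self, mul_zero, sub_zero, mul_one, Prod.mk.injEq,
    and_true]
  ring

theorem mu_mem_container (m n k : ℕ) (x y : ZMod m) : Mu m n k x y ∈ Container m n k x y :=
  ⟨1, by rw [mul_one]⟩

theorem exists_container_subset_of_mem_sigmaG {m n k : ℕ} {S : Set (ZMod m)}
    {f : Function.End (ZMod m × ZMod n)} (hf : f ∈ SigmaG m n k S) :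
    ∃ a b, f = Mu m n k a b ∧ Container m n k a b ⊆ SigmaG m n k S := by
  induction hf using Subsemigroup.closure_induction with
  | mem g hg =>
    obtain ⟨s, hs, w, rfl⟩ := hg
    refine ⟨s, w, rfl, ?_⟩
    rintro _ ⟨z, rfl⟩
    exact Subsemigroup.subset_closure ⟨s, hs, w * z, rfl⟩
  | mul g h _ _ ihg ihh =>
    obtain ⟨a, b, rfl, hab⟩ := ihg
    obtain ⟨c, d, rfl, hcd⟩ := ihh
    refine ⟨a * c, a * d, mu_mul_mu m n k a b c d, ?_⟩
    rintro _ ⟨z, rfl⟩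
    have hprod : Mu m n k a b * Mu m n k c (d * z) = Mu m n k (a * c) (a * d * z) := by
      rw [mu_mul_mu, mul_assoc]
    exact hprod ▸ mul_mem (hab (mu_mem_container m n k a b)) (hcd ⟨z, rfl⟩)

theorem eq_and_eq_of_mu_eq_mu {m n k : ℕ} (hk : IsUnit ((k : ZMod m) ^ (1 : ZMod n).val - 1))
    {x y a b : ZMod m} (h : Mu m n k x y = Mu m n k a b) : x = a ∧ y = b := by
  have h₁ := congrArg Prod.fst (congrFun h (1, 0))
  have h₂ := congrArg Prod.fst (congrFun h (0, 1))
  simp only [Mu, ZMod.val_zero, pow_zero, mul_one, sub_self, mul_zero, sub_zero,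
    zero_mul, zero_sub, neg_inj] at h₁ h₂
  exact ⟨h₁, hk.mul_left_injective h₂⟩

theorem isUnit_natCast_sub_one {m k : ℕ} (hcop : Nat.gcd m (k - 1) = 1) :
    IsUnit ((k : ZMod m) - 1) := by
  rcases k with _ | j
  · simp
  · rw [Nat.cast_succ, add_sub_cancel_right]
    exact (ZMod.isUnit_iff_coprime j m).mpr (Nat.coprime_comm.mp hcop)

/-- For `n = 1` the exponent `(1 : ZMod 1).val` is `0`, but then `k ≡ 1 (mod m)`. -/
theorem natCast_pow_val_one {m n k : ℕ} (hind : IsIndex m k n) :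
    (k : ZMod m) ^ (1 : ZMod n).val = k := by
  obtain rfl | hn := eq_or_ne n 1
  · have hk : (k : ZMod m) = 1 :=
      mod_cast (ZMod.natCast_eq_natCast_iff k 1 m).mpr (by simpa using hind.2.1)
    simp [hk]
  · rw [ZMod.val_one_eq_one_mod, Nat.one_mod_eq_one.mpr hn, pow_one]

theorem stmt_14_general (m n k : ℕ)
    (hcop : Nat.gcd m (k - 1) = 1) (hind : IsIndex m k n)
    (S : Set (ZMod m)) (x y : ZMod m) :
    Mu m n k x y ∈ SigmaG m n k S ↔ Container m n k x y ⊆ SigmaG m n k S := by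
  have hunit : IsUnit ((k : ZMod m) ^ (1 : ZMod n).val - 1) := by
    rw [natCast_pow_val_one hind]
    exact isUnit_natCast_sub_one hcop
  refine ⟨fun h => ?_, fun h => h (mu_mem_container m n k x y)⟩
  obtain ⟨a, b, hab, hC⟩ := exists_container_subset_of_mem_sigmaG h
  obtain ⟨rfl, rfl⟩ := eq_and_eq_of_mu_eq_mu hunit hab
  exact hC

/-- `μ(x,y) ∈ Σ_G(S)` iff the whole container
`C(x,y)` is contained in `Σ_G(S)`. -/
theorem stmt_14 (m n k : ℕ) (hm : 0 < m) (hk : 0 < k)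
    (hcop : Nat.gcd m (k - 1) = 1) (hind : IsIndex m k n)
    (S : Set (ZMod m)) (hS : IsBase m S) (x y : ZMod m) :
    Mu m n k x y ∈ SigmaG m n k S ↔ Container m n k x y ⊆ SigmaG m n k S :=
  stmt_14_general m n k hcop hind S x y
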